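/- Let X be a complex Banach space, let 𝒮 be a closed linear subspace of the Banach algebra of bounded linear operators on X whose elements pairwise commute, let c be a bounded linear operator on X and ψ₀ ∈ X, and define g : 𝒮 → X by g(t) = exp(−t)(c(exp(t)ψ₀)). If t* ∈ 𝒮 and E ∈ ℂ satisfy c(exp(t*)ψ₀) = E·exp(t*)ψ₀, then g is Fréchet differentiable at t* with Fréchet derivative Dg(t*)s = exp(−t*)((c − E·I)(exp(t*)(sψ₀))) for every s ∈ 𝒮, where I is the identity operator. -/

import Mathlib

/-!
Pairwise commuting operators satisfy `exp (t + s) = exp t * exp s`, so on `𝒮` the exponential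
has derivative `s ↦ exp t * s` at `t`, exactly as in a commutative algebra. The product rule then
differentiates `u ↦ exp (-u) * c * exp u` at `t` to `s ↦ exp (-t) * (c * s - s * c) * exp t`,
using that `s` commutes with `exp t`. Applied to `ψ₀`, the eigenvalue equation turns
`s (c (exp t ψ₀))` into `E • exp t (s ψ₀)`, which is the `E • 1` term of the derivative.
-/

open NormedSpace ContinuousLinearMap

section CommutingSubmodule

variable {𝕂 A : Type*} [RCLike 𝕂] [NormedRing A] [NormedAlgebra 𝕂 A] [CompleteSpace A]
  {𝒮 : Submodule 𝕂 A}

theorem hasFDerivAt_exp_coe_of_commute (h𝒮 : ∀ x y : 𝒮, Commute (x : A) y) (t : 𝒮) :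
    HasFDerivAt (fun u : 𝒮 => exp (u : A)) ((mul 𝕂 A (exp (t : A))).comp 𝒮.subtypeL) t := by
  let : NormedAlgebra ℚ A := .restrictScalars ℚ 𝕂 A
  have hexp : HasFDerivAt (fun s : 𝒮 => exp (s : A)) ((1 : A →L[𝕂] A).comp 𝒮.subtypeL) 0 :=
    hasFDerivAt_exp_zero.comp (0 : 𝒮) 𝒮.subtypeL.hasFDerivAt
  have hshift : HasFDerivAt (fun s : 𝒮 => exp ((t + s : 𝒮) : A))
      ((mul 𝕂 A (exp (t : A))).comp 𝒮.subtypeL) 0 := by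
    simp only [Submodule.coe_add, exp_add_of_commute (h𝒮 t _)]
    exact (mul 𝕂 A (exp (t : A))).hasFDerivAt.comp 0 hexp
  have := (hasFDerivAt_comp_add_left (f := fun u : 𝒮 => exp (u : A)) (x := 0) t).1 hshift
  rwa [add_zero] at this

theorem hasFDerivAt_exp_neg_mul_mul_exp (h𝒮 : ∀ x y : 𝒮, Commute (x : A) y) (c : A) (t : 𝒮) :
    HasFDerivAt (fun u : 𝒮 => exp (-(u : A)) * c * exp (u : A))
      ((mulLeftRight 𝕂 A (exp (-(t : A))) (exp (t : A))).comp
        ((mul 𝕂 A c - (mul 𝕂 A).flip c).comp 𝒮.subtypeL)) t := by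
  have hneg : HasFDerivAt (fun u : 𝒮 => exp (-(u : A)))
      ((mul 𝕂 A (exp (-(t : A)))).comp (𝒮.subtypeL.comp (-ContinuousLinearMap.id 𝕂 𝒮))) t :=
    (hasFDerivAt_exp_coe_of_commute h𝒮 (-t)).comp t (hasFDerivAt_id t).neg
  refine ((hneg.mul_const' c).fun_mul' (hasFDerivAt_exp_coe_of_commute h𝒮 t)).congr_fderiv ?_
  ext s
  have hs : (s : A) * exp (t : A) = exp (t : A) * s := ((h𝒮 s t).exp_right).eq
  simp [hs, mul_assoc, sub_eq_add_neg]

end CommutingSubmodule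

theorem cc_frechet_derivative_at_zero_general
    {X : Type*} [NormedAddCommGroup X] [NormedSpace ℂ X] [CompleteSpace X]
    (𝒮 : Submodule ℂ (X →L[ℂ] X))
    (h𝒮comm : ∀ x y : 𝒮, (x : X →L[ℂ] X) ∘L (y : X →L[ℂ] X) = (y : X →L[ℂ] X) ∘L (x : X →L[ℂ] X))
    (c : X →L[ℂ] X) (ψ₀ : X) (tstar : 𝒮) (E : ℂ)
    (heig : c (NormedSpace.exp (tstar : X →L[ℂ] X) ψ₀) =
      E • NormedSpace.exp (tstar : X →L[ℂ] X) ψ₀) :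
    ∃ D : 𝒮 →L[ℂ] X,
      (∀ s : 𝒮, D s =
        NormedSpace.exp (-(tstar : X →L[ℂ] X))
          ((c - E • (1 : X →L[ℂ] X))
            (NormedSpace.exp (tstar : X →L[ℂ] X) ((s : X →L[ℂ] X) ψ₀)))) ∧
      HasFDerivAt
        (fun t : 𝒮 =>
          NormedSpace.exp (-(t : X →L[ℂ] X))
            (c (NormedSpace.exp (t : X →L[ℂ] X) ψ₀)))
        D tstar := by
  have hcomm : ∀ x y : 𝒮, Commute (x : X →L[ℂ] X) y := h𝒮comm
  have hderiv := (apply ℂ X ψ₀).hasFDerivAt.comp tstar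
    (hasFDerivAt_exp_neg_mul_mul_exp hcomm c tstar)
  refine ⟨_, fun s => ?_, hderiv⟩
  have hs : (s : X →L[ℂ] X) (exp (tstar : X →L[ℂ] X) ψ₀) =
      exp (tstar : X →L[ℂ] X) ((s : X →L[ℂ] X) ψ₀) :=
    congr($((hcomm s tstar).exp_right.eq) ψ₀)
  simp [hs, heig]

/-- Let `X` be a complex Banach space, `𝒮` a closed linear subspace of the
algebra of bounded operators on `X` whose elements pairwise commute, `c` a bounded operator,
`ψ₀ ∈ X`, and `g : 𝒮 → X` given by `g(t) = exp(−t)(c(exp(t)ψ₀))`.  If `t* ∈ 𝒮` and `E ∈ ℂ`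
satisfy `c(exp(t*)ψ₀) = E·exp(t*)ψ₀`, then `g` is Fréchet differentiable at `t*` with derivative
`Dg(t*)s = exp(−t*)((c − E·I)(exp(t*)(sψ₀)))`. -/
theorem cc_frechet_derivative_at_zero
    {X : Type*} [NormedAddCommGroup X] [NormedSpace ℂ X] [CompleteSpace X]
    (𝒮 : Submodule ℂ (X →L[ℂ] X)) (h𝒮closed : IsClosed (𝒮 : Set (X →L[ℂ] X)))
    (h𝒮comm : ∀ x y : 𝒮, (x : X →L[ℂ] X) ∘L (y : X →L[ℂ] X) = (y : X →L[ℂ] X) ∘L (x : X →L[ℂ] X))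
    (c : X →L[ℂ] X) (ψ₀ : X) (tstar : 𝒮) (E : ℂ)
    (heig : c (NormedSpace.exp (tstar : X →L[ℂ] X) ψ₀) =
      E • NormedSpace.exp (tstar : X →L[ℂ] X) ψ₀) :
    ∃ D : 𝒮 →L[ℂ] X,
      (∀ s : 𝒮, D s =
        NormedSpace.exp (-(tstar : X →L[ℂ] X))
          ((c - E • (1 : X →L[ℂ] X))
            (NormedSpace.exp (tstar : X →L[ℂ] X) ((s : X →L[ℂ] X) ψ₀)))) ∧
      HasFDerivAt
        (fun t : 𝒮 =>
          NormedSpace.exp (-(t : X →L[ℂ] X))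
            (c (NormedSpace.exp (t : X →L[ℂ] X) ψ₀)))
        D tstar :=
  cc_frechet_derivative_at_zero_general 𝒮 h𝒮comm c ψ₀ tstar E heig
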